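/- Let F : 𝒜 ⥤ ℬ be a lax monoidal functor between symmetric Picard categories, with unit morphism F⁰ : 𝟙 ⟶ F𝟙 and structure morphisms F²_{x,y} : Fx ⊗ Fy ⟶ F(x ⊗ y). For every object a of 𝒜 there exists a unique morphism c^F_a : (Fa)^• ⟶ F(a^•) such that j_{Fa} ≫ (c^F_a ⊗ 𝟙_{Fa}) ≫ F²_{a^•,a} = F⁰ ≫ F(j_a). Moreover each c^F_a is an isomorphism, and the family is natural: for every morphism f : a ⟶ b of 𝒜, (Ff)^• ≫ c^F_a = c^F_b ≫ F(f^•). -/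

import Mathlib

open CategoryTheory Category MonoidalCategory

universe v u

/-- A symmetric Picard category: a symmetric monoidal groupoid equipped with, for every
object `a`, a chosen object `dual a` and a chosen isomorphism `j a : 𝟙_ C ≅ dual a ⊗ a`. -/
class SymmetricPicard (C : Type u) [Groupoid.{v} C] [MonoidalCategory C]
    [SymmetricCategory C] where
  dual : C → C
  j : ∀ a : C, 𝟙_ C ≅ dual a ⊗ a

namespace SymmetricPicard

variable {C : Type u} [Groupoid.{v} C] [MonoidalCategory C] [SymmetricCategory C]
  [SymmetricPicard C]

/-- The dual of a morphism `f : a ⟶ b`: the unique morphism `g : dual b ⟶ dual a`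
such that `(j b).hom ≫ (g ⊗ₘ inv f) = (j a).hom`. -/
noncomputable def dualHom {a b : C} (f : a ⟶ b) : dual b ⟶ dual a :=
  @Classical.epsilon _
    ⟨(ρ_ (dual b)).inv ≫ (dual b ◁ (j a).hom) ≫ (dual b ◁ (dual a ◁ f)) ≫
      (α_ (dual b) (dual a) b).inv ≫ ((β_ (dual b) (dual a)).hom ▷ b) ≫
      (α_ (dual a) (dual b) b).hom ≫ (dual a ◁ (j b).inv) ≫ (ρ_ (dual a)).hom⟩
    (fun g => (j b).hom ≫ (g ⊗ₘ inv f) = (j a).hom)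

/-- The canonical pairing `(a^• ⊗ b^•) ⊗ (b ⊗ a) ⟶ 𝟙`. -/
noncomputable def pairing (a b : C) : (dual a ⊗ dual b) ⊗ (b ⊗ a) ⟶ 𝟙_ C :=
  (α_ (dual a) (dual b) (b ⊗ a)).hom ≫ (𝟙 (dual a) ⊗ₘ (α_ (dual b) b a).inv) ≫
    (𝟙 (dual a) ⊗ₘ ((j b).inv ⊗ₘ 𝟙 a)) ≫ (𝟙 (dual a) ⊗ₘ (λ_ a).hom) ≫ (j a).inv

/-- Laplaza's canonical arrow `κ_{a,b} : a^• ⊗ b^• ⟶ (b ⊗ a)^•`: the unique morphism `f`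
such that `(f ⊗ 𝟙_{b⊗a}) ≫ j_{b⊗a}⁻¹` is the canonical pairing. -/
noncomputable def kappa (a b : C) : dual a ⊗ dual b ⟶ dual (b ⊗ a) :=
  @Classical.epsilon _
    ⟨(ρ_ (dual a ⊗ dual b)).inv ≫ ((dual a ⊗ dual b) ◁ (j (b ⊗ a)).hom) ≫
      ((dual a ⊗ dual b) ◁ (β_ (dual (b ⊗ a)) (b ⊗ a)).hom) ≫
      (α_ (dual a ⊗ dual b) (b ⊗ a) (dual (b ⊗ a))).inv ≫
      (pairing a b ▷ dual (b ⊗ a)) ≫ (λ_ (dual (b ⊗ a))).hom⟩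
    (fun f => (f ⊗ₘ 𝟙 (b ⊗ a)) ≫ (j (b ⊗ a)).inv = pairing a b)

end SymmetricPicard

/-!
Tensoring on the right with an object `a` that is invertible up to isomorphism is an
autoequivalence, so `g ↦ g ▷ a` is a bijection on hom-sets. The defining equation of `c^F_a`
prescribes `c^F_a ▷ Fa` as an explicit composite, which gives existence and uniqueness;
invertibility is automatic in a groupoid. Naturality follows from injectivity of `- ▷ Fb`:
after whiskering, pre-composing with `j_{Fb}` and post-composing with `F²`, both
`(Ff)^• ≫ c^F_a` and `c^F_b ≫ F(f^•)` become `F⁰ ≫ F(j_a ≫ (a^• ◁ f))`, using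
`j_a ≫ (a^• ◁ f) = j_b ≫ (f^• ▷ b)` in `𝒜` and in `ℬ`.
-/

namespace CategoryTheory.MonoidalCategory

variable {C : Type u} [Category.{v} C] [MonoidalCategory C]

theorem existsUnique_whiskerRight_eq (a : C) [(tensorRight a).Full] [(tensorRight a).Faithful]
    {x y : C} (h : x ⊗ a ⟶ y ⊗ a) : ∃! g : x ⟶ y, g ▷ a = h :=
  let ⟨g, hg⟩ := (tensorRight a).map_surjective h
  ⟨g, hg, fun _ hg' => (tensorRight a).map_injective (hg'.trans hg.symm)⟩

noncomputable def tensorRightEquivalenceOfIso [BraidedCategory C] {a b : C}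
    (e : 𝟙_ C ≅ b ⊗ a) : C ≌ C :=
  CategoryTheory.Equivalence.mk (tensorRight a) (tensorRight b)
    (NatIso.ofComponents
      (fun x => (ρ_ x).symm ≪≫ whiskerLeftIso x (e ≪≫ β_ b a) ≪≫ (α_ x a b).symm)
      (fun f => by
        dsimp
        simp only [whiskerLeftIso_hom, Iso.trans_hom, whiskerLeft_comp, assoc]
        rw [rightUnitor_inv_naturality_assoc, ← whisker_exchange_assoc,
          ← whisker_exchange_assoc, associator_inv_naturality_left]))
    (NatIso.ofComponents
      (fun x => α_ x b a ≪≫ whiskerLeftIso x e.symm ≪≫ ρ_ x)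
      (fun f => by
        dsimp
        simp only [whiskerLeftIso_hom, Iso.symm_hom, assoc]
        rw [associator_naturality_left_assoc, ← whisker_exchange_assoc, rightUnitor_naturality]))

end CategoryTheory.MonoidalCategory

namespace SymmetricPicard

section

variable {C : Type u} [Groupoid.{v} C] [MonoidalCategory C] [SymmetricCategory C]
  [SymmetricPicard C]

instance (a : C) : (tensorRight a).IsEquivalence :=
  (tensorRightEquivalenceOfIso (j a)).isEquivalence_functor

theorem dualHom_whiskerRight {a b : C} (f : a ⟶ b) :
    (j b).hom ≫ (dualHom f ▷ b) = (j a).hom ≫ (dual a ◁ f) := by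
  have spec_iff (g : dual b ⟶ dual a) : (j b).hom ≫ (g ⊗ₘ inv f) = (j a).hom ↔
      (j b).hom ≫ (g ▷ b) = (j a).hom ≫ (dual a ◁ f) := by
    rw [MonoidalCategory.tensorHom_def, ← assoc, ← inv_whiskerLeft, IsIso.comp_inv_eq]
  obtain ⟨g, hg, -⟩ :=
    existsUnique_whiskerRight_eq b ((j b).inv ≫ (j a).hom ≫ (dual a ◁ f))
  have hg_spec : (j b).hom ≫ (g ⊗ₘ inv f) = (j a).hom :=
    (spec_iff g).2 (by rw [hg, Iso.hom_inv_id_assoc])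
  exact (spec_iff _).1
    (Classical.epsilon_spec (p := fun g => (j b).hom ≫ (g ⊗ₘ inv f) = (j a).hom) ⟨g, hg_spec⟩)

end

open Functor.LaxMonoidal

universe v₁ u₁ v₂ u₂

section LaxMonoidal

variable {A : Type u₁} [Groupoid.{v₁} A] [MonoidalCategory A] [SymmetricCategory A]
  [SymmetricPicard A] {B : Type u₂} [Groupoid.{v₂} B] [MonoidalCategory B]
  [SymmetricCategory B] [SymmetricPicard B] (F : A ⥤ B) [F.LaxMonoidal]

def IsDualComparison (a : A) (c : dual (F.obj a) ⟶ F.obj (dual a)) : Prop :=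
  (j (F.obj a)).hom ≫ (c ⊗ₘ 𝟙 (F.obj a)) ≫ μ F (dual a) a = ε F ≫ F.map (j a).hom

theorem isDualComparison_iff (a : A) (c : dual (F.obj a) ⟶ F.obj (dual a)) :
    IsDualComparison F a c ↔
      c ▷ F.obj a = (j (F.obj a)).inv ≫ ε F ≫ F.map (j a).hom ≫ inv (μ F (dual a) a) := by
  rw [IsDualComparison, tensorHom_id, Iso.eq_inv_comp]
  simp only [← assoc, IsIso.eq_comp_inv]

theorem existsUnique_isDualComparison (a : A) : ∃! c, IsDualComparison F a c :=
  (existsUnique_congr (isDualComparison_iff F a)).2 (existsUnique_whiskerRight_eq _ _)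

variable {F}

theorem IsDualComparison.dualHom_map_comp {a b : A} (f : a ⟶ b)
    {ca : dual (F.obj a) ⟶ F.obj (dual a)} (ha : IsDualComparison F a ca) :
    (j (F.obj b)).hom ≫ ((dualHom (F.map f) ≫ ca) ▷ F.obj b) ≫ μ F (dual a) b =
      ε F ≫ F.map ((j a).hom ≫ (dual a ◁ f)) := by
  rw [IsDualComparison, tensorHom_id] at ha
  rw [comp_whiskerRight, assoc, reassoc_of% dualHom_whiskerRight, whisker_exchange_assoc,
    μ_natural_right, reassoc_of% ha, F.map_comp]

theorem IsDualComparison.comp_map_dualHom {a b : A} (f : a ⟶ b)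
    {cb : dual (F.obj b) ⟶ F.obj (dual b)} (hb : IsDualComparison F b cb) :
    (j (F.obj b)).hom ≫ ((cb ≫ F.map (dualHom f)) ▷ F.obj b) ≫ μ F (dual a) b =
      ε F ≫ F.map ((j a).hom ≫ (dual a ◁ f)) := by
  rw [IsDualComparison, tensorHom_id] at hb
  rw [comp_whiskerRight, assoc, μ_natural_left, reassoc_of% hb, ← F.map_comp,
    dualHom_whiskerRight]

theorem IsDualComparison.naturality {a b : A} (f : a ⟶ b)
    {ca : dual (F.obj a) ⟶ F.obj (dual a)} {cb : dual (F.obj b) ⟶ F.obj (dual b)}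
    (ha : IsDualComparison F a ca) (hb : IsDualComparison F b cb) :
    dualHom (F.map f) ≫ ca = cb ≫ F.map (dualHom f) := by
  have h := (ha.dualHom_map_comp f).trans (hb.comp_map_dualHom f).symm
  rw [cancel_epi, cancel_mono] at h
  exact (tensorRight (F.obj b)).map_injective h

end LaxMonoidal

/-- For a lax monoidal functor `F` between symmetric Picard categories, with unit morphism
`ε F` and structure morphisms `μ F x y`, for every object `a` there is a unique morphism
`c : (Fa)^• ⟶ F(a^•)` with `j_{Fa} ≫ (c ⊗ 𝟙_{Fa}) ≫ μ F a^• a = ε F ≫ F(j_a)`; moreover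
any such `c` is an isomorphism, and the family is natural: `(Ff)^• ≫ c_a = c_b ≫ F(f^•)`. -/
theorem statement8 {A : Type u₁} [Groupoid.{v₁} A] [MonoidalCategory A]
    [SymmetricCategory A] [SymmetricPicard A]
    {B : Type u₂} [Groupoid.{v₂} B] [MonoidalCategory B]
    [SymmetricCategory B] [SymmetricPicard B]
    (F : A ⥤ B) [F.LaxMonoidal] :
    (∀ a : A, ∃! c : dual (F.obj a) ⟶ F.obj (dual a),
        (j (F.obj a)).hom ≫ (c ⊗ₘ 𝟙 (F.obj a)) ≫ μ F (dual a) a = ε F ≫ F.map (j a).hom) ∧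
    (∀ (a : A) (c : dual (F.obj a) ⟶ F.obj (dual a)),
        (j (F.obj a)).hom ≫ (c ⊗ₘ 𝟙 (F.obj a)) ≫ μ F (dual a) a = ε F ≫ F.map (j a).hom →
        IsIso c) ∧
    (∀ {a b : A} (f : a ⟶ b)
        (ca : dual (F.obj a) ⟶ F.obj (dual a)) (cb : dual (F.obj b) ⟶ F.obj (dual b)),
        (j (F.obj a)).hom ≫ (ca ⊗ₘ 𝟙 (F.obj a)) ≫ μ F (dual a) a = ε F ≫ F.map (j a).hom →
        (j (F.obj b)).hom ≫ (cb ⊗ₘ 𝟙 (F.obj b)) ≫ μ F (dual b) b = ε F ≫ F.map (j b).hom →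
        dualHom (F.map f) ≫ ca = cb ≫ F.map (dualHom f)) :=
  ⟨existsUnique_isDualComparison F, fun _ _ _ => inferInstance,
    fun f _ _ ha hb => IsDualComparison.naturality f ha hb⟩

end SymmetricPicard
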